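/- arXiv:1809.02283 — 2 statements merged into one kernel-verified Lean document; each statement's English description precedes it below -/
import Mathlib

section
/- Soundness of HFTA construction on formulas (Lemma A.3): Let Φ be a ground formula in which every function symbol f_1,…,f_n occurs exactly once, and suppose G, M ⊢ Φ ↝ H by the HFTA construction rules (before the Final rule restricts final states). Then for every hierarchical tree T = (V, Υ, v_r, E) accepted by H: (1) each Υ(v_{f_i}) is a program that conforms to grammar G(M⁻¹(f_i)); (2) if the accepting run of Υ(v_r) on Ω(v_r) labels its root with the final state q_{s0}^⊤, then Υ(v_{f_1}),…,Υ(v_{f_n}) ⊨ Φ; and (3) if the accepting run labels its root with q_{s0}^⊥, then Υ(v_{f_1}),…,Υ(v_{f_n}) ⊭ Φ. -/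
namespace Relish

/-- Alphabet symbols for program and specification trees: DSL constructs,
variables `xᵢ`, constants, binary (relational/logical) operators, and negation. -/
inductive Alpha (op val bop : Type) : Type where
  | dsl : op → Alpha op val bop
  | var : ℕ → Alpha op val bop
  | cst : val → Alpha op val bop
  | lop : bop → Alpha op val bop
  | neg : Alpha op val bop

/-- Finite trees (terms) over an alphabet. -/
inductive Tree (α : Type) : Type where
  | node : α → List (Tree α) → Tree α

/-- Bottom-up finite tree automaton: states, final states, and transitions
`σ(q₁, …, qₙ) → q`. -/
structure FTA (α Q : Type) : Type where
  states : Set Q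
  finals : Set Q
  trans : Set (α × List Q × Q)

/-- A run of an FTA on a tree reaching state `q`, in which every variable leaf
`var i` is assigned the state `leaf i`. -/
inductive RunFrom {op val bop Q : Type} (A : FTA (Alpha op val bop) Q) (leaf : ℕ → Q) :
    Tree (Alpha op val bop) → Q → Prop where
  | node (a : Alpha op val bop) (ts : List (Tree (Alpha op val bop))) (qs : List Q) (q : Q) :
      (a, qs, q) ∈ A.trans →
      (∀ i : ℕ, a = Alpha.var i → q = leaf i) →
      ts.length = qs.length →
      (∀ p ∈ ts.zip qs, RunFrom A leaf p.1 p.2) →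
      RunFrom A leaf (Tree.node a ts) q

/-- Symbols labeling FTA states: grammar nonterminals, variables `xᵢ`, or the
special start/constant symbol `s₀`. -/
inductive SymT (ν : Type) : Type where
  | nt : ν → SymT ν
  | var : ℕ → SymT ν
  | start : SymT ν

/-- A context-free grammar: productions `s → σ(s₁, …, sₙ)` and a start symbol. -/
structure Grammar (op ν : Type) : Type where
  prods : Set (ν × op × List (SymT ν))
  start : ν

/-- Derivation of a tree from a grammar symbol. -/
inductive Derives {op val bop ν : Type} (G : Grammar op ν) :
    SymT ν → Tree (Alpha op val bop) → Prop where
  | var (i : ℕ) : Derives G (SymT.var i) (Tree.node (Alpha.var i) [])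
  | prod (s : ν) (o : op) (ss : List (SymT ν)) (ts : List (Tree (Alpha op val bop))) :
      (s, o, ss) ∈ G.prods →
      ss.length = ts.length →
      (∀ p ∈ ss.zip ts, Derives G p.1 p.2) →
      Derives G (SymT.nt s) (Tree.node (Alpha.dsl o) ts)

/-- A program (tree) conforms to grammar `G` if it is derivable from the start symbol. -/
def ConformsTo {op val bop ν : Type} (G : Grammar op ν) (t : Tree (Alpha op val bop)) : Prop :=
  Derives G (SymT.nt G.start) t

/-- Evaluation of a program tree under DSL semantics `sem`, binary operator
semantics `bsem`, negation semantics `nsem`, and argument assignment `args`. -/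
inductive EvalsTo {op val bop : Type} (sem : op → List val → val)
    (bsem : bop → val → val → val) (nsem : val → val) (args : ℕ → val) :
    Tree (Alpha op val bop) → val → Prop where
  | var (i : ℕ) : EvalsTo sem bsem nsem args (Tree.node (Alpha.var i) []) (args i)
  | cst (c : val) : EvalsTo sem bsem nsem args (Tree.node (Alpha.cst c) []) c
  | dsl (o : op) (ts : List (Tree (Alpha op val bop))) (cs : List val) :
      ts.length = cs.length →
      (∀ p ∈ ts.zip cs, EvalsTo sem bsem nsem args p.1 p.2) →
      EvalsTo sem bsem nsem args (Tree.node (Alpha.dsl o) ts) (sem o cs)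
  | lop (b : bop) (t₁ t₂ : Tree (Alpha op val bop)) (c₁ c₂ : val) :
      EvalsTo sem bsem nsem args t₁ c₁ →
      EvalsTo sem bsem nsem args t₂ c₂ →
      EvalsTo sem bsem nsem args (Tree.node (Alpha.lop b) [t₁, t₂]) (bsem b c₁ c₂)
  | neg (t : Tree (Alpha op val bop)) (c : val) :
      EvalsTo sem bsem nsem args t c →
      EvalsTo sem bsem nsem args (Tree.node Alpha.neg [t]) (nsem c)

/-- States of `BuildFTA(G, [Q₁, …, Qₘ])`, generated by the Input and Prod rules;
`init i` is the set of values of the i-th initial state set `Qᵢ`. -/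
inductive BStates {op val ν : Type} (G : Grammar op ν) (sem : op → List val → val)
    (arity : ℕ) (init : ℕ → Set val) : SymT ν × val → Prop where
  | input (i : ℕ) (c : val) : i < arity → c ∈ init i →
      BStates G sem arity init (SymT.var i, c)
  | prod (s : ν) (o : op) (ss : List (SymT ν)) (cs : List val) :
      (s, o, ss) ∈ G.prods →
      ss.length = cs.length →
      (∀ p ∈ ss.zip cs, BStates G sem arity init p) →
      BStates G sem arity init (SymT.nt s, sem o cs)

/-- Transitions of `BuildFTA(G, [Q₁, …, Qₘ])` (Input and Prod rules). -/
inductive BTrans {op val ν : Type} (bop : Type) (G : Grammar op ν) (sem : op → List val → val)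
    (arity : ℕ) (init : ℕ → Set val) :
    Alpha op val bop × List (SymT ν × val) × (SymT ν × val) → Prop where
  | input (i : ℕ) (c : val) : i < arity → c ∈ init i →
      BTrans bop G sem arity init (Alpha.var i, [], (SymT.var i, c))
  | prod (s : ν) (o : op) (ss : List (SymT ν)) (cs : List val) :
      (s, o, ss) ∈ G.prods →
      ss.length = cs.length →
      (∀ p ∈ ss.zip cs, BStates G sem arity init p) →
      BTrans bop G sem arity init (Alpha.dsl o, ss.zip cs, (SymT.nt s, sem o cs))

/-- The FTA produced by the `BuildFTA` procedure: final states are all states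
`q_{s₀}^c` where `s₀` is the start symbol of the grammar (Output rule). -/
def buildFTA {op val ν : Type} (bop : Type) (G : Grammar op ν) (sem : op → List val → val)
    (arity : ℕ) (init : ℕ → Set val) : FTA (Alpha op val bop) (SymT ν × val) where
  states := {q | BStates G sem arity init q}
  finals := {q | BStates G sem arity init q ∧ q.1 = SymT.nt G.start}
  trans := {t | BTrans bop G sem arity init t}

/-- Hierarchical finite tree automaton; nodes are tree positions (the root is `[]`). -/
structure HFTA (α Q : Type) : Type where
  nodes : Set (List ℕ)
  fta : List ℕ → FTA α Q
  children : List ℕ → List (List ℕ)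
  inter : Set (Q × Q)

/-- Acceptance of a hierarchical tree `T` by an HFTA `H`, witnessed by root
states `ρ` and input-state assignments `leaf`: every node's term has an
accepting run, and for every edge from `v` to its i-th child `v'`, the final
state at the root of the run on `T v'` is related by the inter-FTA transitions
to the input state used for `xᵢ` in the run on `T v`. -/
def HAcceptWith {op val bop Q : Type} (H : HFTA (Alpha op val bop) Q)
    (T : List ℕ → Tree (Alpha op val bop)) (ρ : List ℕ → Q) (leaf : List ℕ → ℕ → Q) : Prop :=
  ∀ v ∈ H.nodes,
    ρ v ∈ (H.fta v).finals ∧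
    RunFrom (H.fta v) (leaf v) (T v) (ρ v) ∧
    ∀ (i : ℕ) (v' : List ℕ), (H.children v)[i]? = some v' → (ρ v', leaf v i) ∈ H.inter

/-- A hierarchical tree is accepted by an HFTA if some witnesses exist. -/
def HAccepts {op val bop Q : Type} (H : HFTA (Alpha op val bop) Q)
    (T : List ℕ → Tree (Alpha op val bop)) : Prop :=
  ∃ ρ leaf, HAcceptWith H T ρ leaf

/-- States of the FTAs inside a constructed HFTA: a node position paired with an
FTA state `q_s^c`. -/
abbrev TQ (ν val : Type) : Type := List ℕ × SymT ν × val

def emptyFTA {α Q : Type} : FTA α Q := ⟨∅, ∅, ∅⟩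

def mapFTA {α Q Q' : Type} (g : Q → Q') (A : FTA α Q) : FTA α Q' where
  states := g '' A.states
  finals := g '' A.finals
  trans := {t | ∃ a qs q, (a, qs, q) ∈ A.trans ∧ t = (a, qs.map g, g q)}

def tagState {ν val : Type} (i : ℕ) (q : TQ ν val) : TQ ν val := (i :: q.1, q.2)

/-- The values carried by the final states of the root FTA of an HFTA. -/
def rootVals {α ν val : Type} (H : HFTA α (TQ ν val)) : Set val :=
  {c | ∃ q ∈ (H.fta []).finals, q.2.2 = c}

/-- Combine a root FTA `A` with a list of children HFTAs, adding inter-FTA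
transitions from each final state `q_s^c` of a child's root FTA to the input
state `q_{xᵢ}^c` of the root FTA. -/
def combine {α ν val : Type} (A : FTA α (SymT ν × val)) (Hs : List (HFTA α (TQ ν val))) :
    HFTA α (TQ ν val) where
  nodes := {v | v = [] ∨ ∃ i H v', Hs[i]? = some H ∧ v' ∈ H.nodes ∧ v = i :: v'}
  fta := fun v =>
    match v with
    | [] => mapFTA (fun q => (([] : List ℕ), q)) A
    | i :: v' =>
      match Hs[i]? with
      | some H => mapFTA (tagState i) (H.fta v')
      | none => emptyFTA
  children := fun v =>
    match v with
    | [] => (List.range Hs.length).map (fun i => [i])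
    | i :: v' =>
      match Hs[i]? with
      | some H => (H.children v').map (i :: ·)
      | none => []
  inter :=
    {e | ∃ i H q q', Hs[i]? = some H ∧ (q, q') ∈ H.inter ∧ e = (tagState i q, tagState i q')} ∪
    {e | ∃ i H q, Hs[i]? = some H ∧ q ∈ (H.fta []).finals ∧
        e = (tagState i q, (([] : List ℕ), (SymT.var i, q.2.2)))}

/-- FTA for a constant node (Const rule): accepts only the constant `c`. -/
def constFTA {op val ν : Type} (bop : Type) (c : val) :
    FTA (Alpha op val bop) (SymT ν × val) where
  states := {(SymT.start, c)}
  finals := {(SymT.start, c)}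
  trans := {(Alpha.cst c, [], (SymT.start, c))}

/-- FTA for a binary relational/logical operator node (Logical rule). -/
def logicFTA {op val bop ν : Type} (vtrue vfalse : val) (bsem : bop → val → val → val)
    (b : bop) (C₁ C₂ : Set val) : FTA (Alpha op val bop) (SymT ν × val) where
  states := {q | ∃ c ∈ C₁, q = (SymT.var 0, c)} ∪ {q | ∃ c ∈ C₂, q = (SymT.var 1, c)} ∪
      {(SymT.start, vtrue), (SymT.start, vfalse)}
  finals := {(SymT.start, vtrue), (SymT.start, vfalse)}
  trans := {t | ∃ c ∈ C₁, t = (Alpha.var 0, [], (SymT.var 0, c))} ∪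
      {t | ∃ c ∈ C₂, t = (Alpha.var 1, [], (SymT.var 1, c))} ∪
      {t | ∃ c₁ ∈ C₁, ∃ c₂ ∈ C₂,
          t = (Alpha.lop b, [(SymT.var 0, c₁), (SymT.var 1, c₂)], (SymT.start, bsem b c₁ c₂))}

/-- FTA for a negation node (Neg rule). -/
def negFTA {op val bop ν : Type} (vtrue vfalse : val) (nsem : val → val) (C : Set val) :
    FTA (Alpha op val bop) (SymT ν × val) where
  states := {q | ∃ c ∈ C, q = (SymT.var 0, c)} ∪ {(SymT.start, vtrue), (SymT.start, vfalse)}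
  finals := {(SymT.start, vtrue), (SymT.start, vfalse)}
  trans := {t | ∃ c ∈ C, t = (Alpha.var 0, [], (SymT.var 0, c))} ∪
      {t | ∃ c ∈ C, t = (Alpha.neg, [(SymT.var 0, c)], (SymT.start, nsem c))}

/-- Initial value sets obtained from the final states of children root FTAs. -/
def initsOf {α ν val : Type} (Hs : List (HFTA α (TQ ν val))) : ℕ → Set val :=
  fun i =>
    match Hs[i]? with
    | some H => rootVals H
    | none => ∅

/-- Ground specifications `ψ`: constants, applications of function symbols,
binary relational/logical operators, and negation.  A ground specification in
which the topmost constructor is `bin` or `neg` is a formula; one built only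
from `cst`/`app` is a term. -/
inductive GS (F val bop : Type) : Type where
  | cst : val → GS F val bop
  | app : F → List (GS F val bop) → GS F val bop
  | bin : bop → GS F val bop → GS F val bop → GS F val bop
  | neg : GS F val bop → GS F val bop

/-- `ψ` is a term (no logical structure). -/
inductive IsTerm {F val bop : Type} : GS F val bop → Prop where
  | cst (c : val) : IsTerm (GS.cst c)
  | app (f : F) (ts : List (GS F val bop)) : (∀ t ∈ ts, IsTerm t) → IsTerm (GS.app f ts)

/-- `ψ` is a formula. -/
inductive IsForm {F val bop : Type} : GS F val bop → Prop where
  | bin (b : bop) (ψ₁ ψ₂ : GS F val bop) : IsForm (GS.bin b ψ₁ ψ₂)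
  | neg (ψ : GS F val bop) : IsForm ψ → IsForm (GS.neg ψ)

/-- Function symbol `g` occurs at position `p` in a ground specification. -/
inductive OccursAt {F val bop : Type} : GS F val bop → F → List ℕ → Prop where
  | here (f : F) (ts : List (GS F val bop)) : OccursAt (GS.app f ts) f []
  | app (f g : F) (ts : List (GS F val bop)) (i : ℕ) (t : GS F val bop) (p : List ℕ) :
      ts[i]? = some t → OccursAt t g p → OccursAt (GS.app f ts) g (i :: p)
  | binl (b : bop) (ψ₁ ψ₂ : GS F val bop) (g : F) (p : List ℕ) :
      OccursAt ψ₁ g p → OccursAt (GS.bin b ψ₁ ψ₂) g (0 :: p)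
  | binr (b : bop) (ψ₁ ψ₂ : GS F val bop) (g : F) (p : List ℕ) :
      OccursAt ψ₂ g p → OccursAt (GS.bin b ψ₁ ψ₂) g (1 :: p)
  | neg (ψ : GS F val bop) (g : F) (p : List ℕ) :
      OccursAt ψ g p → OccursAt (GS.neg ψ) g (0 :: p)

/-- Every function symbol occurs (at most) once in the ground specification. -/
def OccursOnce {F val bop : Type} (Φ : GS F val bop) : Prop :=
  ∀ (g : F) (p₁ p₂ : List ℕ), OccursAt Φ g p₁ → OccursAt Φ g p₂ → p₁ = p₂

/-- Evaluation of a ground specification under an interpretation `I` assigning a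
program to every function symbol. -/
inductive SpecEval {op val bop F : Type} [Inhabited val] (sem : op → List val → val)
    (bsem : bop → val → val → val) (nsem : val → val)
    (I : F → Tree (Alpha op val bop)) : GS F val bop → val → Prop where
  | cst (c : val) : SpecEval sem bsem nsem I (GS.cst c) c
  | app (f : F) (ts : List (GS F val bop)) (cs : List val) (c : val) :
      ts.length = cs.length →
      (∀ p ∈ ts.zip cs, SpecEval sem bsem nsem I p.1 p.2) →
      EvalsTo sem bsem nsem (fun i => cs.getD i default) (I f) c →
      SpecEval sem bsem nsem I (GS.app f ts) c
  | bin (b : bop) (ψ₁ ψ₂ : GS F val bop) (c₁ c₂ : val) :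
      SpecEval sem bsem nsem I ψ₁ c₁ →
      SpecEval sem bsem nsem I ψ₂ c₂ →
      SpecEval sem bsem nsem I (GS.bin b ψ₁ ψ₂) (bsem b c₁ c₂)
  | neg (ψ : GS F val bop) (c : val) :
      SpecEval sem bsem nsem I ψ c →
      SpecEval sem bsem nsem I (GS.neg ψ) (nsem c)

/-- `I ⊨ Φ`: the ground specification evaluates to true under interpretation `I`. -/
def Satisfies {op val bop F : Type} [Inhabited val] (sem : op → List val → val)
    (bsem : bop → val → val → val) (nsem : val → val) (vtrue : val)
    (I : F → Tree (Alpha op val bop)) (Φ : GS F val bop) : Prop :=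
  SpecEval sem bsem nsem I Φ vtrue

/-- HFTA construction judgment `𝒢, ℳ ⊢ ψ ↝ ℋ` (rules Const, Func, Logical, Neg).
`gram f` is the grammar `𝒢(ℳ⁻¹(f))` associated with occurrence symbol `f`. -/
inductive BuildsH {op val bop ν F : Type} (gram : F → Grammar op ν)
    (sem : op → List val → val) (bsem : bop → val → val → val) (nsem : val → val)
    (vtrue vfalse : val) : GS F val bop → HFTA (Alpha op val bop) (TQ ν val) → Prop where
  | cst (c : val) :
      BuildsH gram sem bsem nsem vtrue vfalse (GS.cst c) (combine (constFTA bop c) [])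
  | app (f : F) (ts : List (GS F val bop)) (Hs : List (HFTA (Alpha op val bop) (TQ ν val))) :
      ts.length = Hs.length →
      (∀ p ∈ ts.zip Hs, BuildsH gram sem bsem nsem vtrue vfalse p.1 p.2) →
      BuildsH gram sem bsem nsem vtrue vfalse (GS.app f ts)
        (combine (buildFTA bop (gram f) sem ts.length (initsOf Hs)) Hs)
  | bin (b : bop) (ψ₁ ψ₂ : GS F val bop) (H₁ H₂ : HFTA (Alpha op val bop) (TQ ν val)) :
      BuildsH gram sem bsem nsem vtrue vfalse ψ₁ H₁ →
      BuildsH gram sem bsem nsem vtrue vfalse ψ₂ H₂ →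
      BuildsH gram sem bsem nsem vtrue vfalse (GS.bin b ψ₁ ψ₂)
        (combine (logicFTA vtrue vfalse bsem b (rootVals H₁) (rootVals H₂)) [H₁, H₂])
  | neg (ψ : GS F val bop) (H₁ : HFTA (Alpha op val bop) (TQ ν val)) :
      BuildsH gram sem bsem nsem vtrue vfalse ψ H₁ →
      BuildsH gram sem bsem nsem vtrue vfalse (GS.neg ψ)
        (combine (negFTA vtrue vfalse nsem (rootVals H₁)) [H₁])

/-- The Final rule: restrict the final states of the root node's FTA to `{q_{s₀}^⊤}`. -/
def finalize {α ν val : Type} (vtrue : val) (H : HFTA α (TQ ν val)) :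
    HFTA α (TQ ν val) where
  nodes := H.nodes
  fta := fun v =>
    if v = [] then
      ⟨(H.fta []).states, {q | q ∈ (H.fta []).finals ∧ q.2 = (SymT.start, vtrue)},
        (H.fta []).trans⟩
    else H.fta v
  children := H.children
  inter := H.inter


/-- The final states of `A` reachable by (accepting) runs of `A` on program `p`. -/
def reachFinals {op val bop Q : Type} (A : FTA (Alpha op val bop) Q)
    (p : Tree (Alpha op val bop)) : Set Q :=
  {q | q ∈ A.finals ∧ ∃ leaf, RunFrom A leaf p q}

/-- The `Propagate` procedure (Algorithm 3): for every node `v ∈ W` (the nodes of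
the occurrences of the function being propagated), shrink the final states of
`Ω(v)` to those reachable by runs on the program `p`, and remove every
inter-FTA transition whose source is a final state that was removed. -/
def propagate {op val bop Q : Type} (H : HFTA (Alpha op val bop) Q)
    (p : Tree (Alpha op val bop)) (W : Set (List ℕ)) : HFTA (Alpha op val bop) Q where
  nodes := H.nodes
  fta := fun v =>
    ⟨(H.fta v).states,
      {q | q ∈ (H.fta v).finals ∧ (v ∈ W → q ∈ reachFinals (H.fta v) p)},
      (H.fta v).trans⟩
  children := H.children
  inter := {e | e ∈ H.inter ∧
      ∀ v ∈ W, e.1 ∈ (H.fta v).finals → e.1 ∈ reachFinals (H.fta v) p}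

/-- Relaxation of a ground specification: each occurrence of a function symbol
of `Φ` is replaced by a fresh occurrence symbol; `Mi` maps each occurrence
symbol back to the original symbol (i.e. `Mi = ℳ⁻¹`). -/
inductive Relax {F F₀ val bop : Type} (Mi : F → F₀) :
    GS F₀ val bop → GS F val bop → Prop where
  | cst (c : val) : Relax Mi (GS.cst c) (GS.cst c)
  | app (f : F₀) (f' : F) (ts : List (GS F₀ val bop)) (ts' : List (GS F val bop)) :
      Mi f' = f →
      ts.length = ts'.length →
      (∀ p ∈ ts.zip ts', Relax Mi p.1 p.2) →
      Relax Mi (GS.app f ts) (GS.app f' ts')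
  | bin (b : bop) (ψ₁ ψ₂ : GS F₀ val bop) (ψ₁' ψ₂' : GS F val bop) :
      Relax Mi ψ₁ ψ₁' → Relax Mi ψ₂ ψ₂' →
      Relax Mi (GS.bin b ψ₁ ψ₂) (GS.bin b ψ₁' ψ₂')
  | neg (ψ : GS F₀ val bop) (ψ' : GS F val bop) :
      Relax Mi ψ ψ' → Relax Mi (GS.neg ψ) (GS.neg ψ')

/-- Returning traces of the backtracking procedure `FindProgs` (Algorithm 2).
`occNodes f` is the set of HFTA nodes of the occurrences of the original
function symbol `f`.  `FPRet occNodes H P R` holds iff `FindProgs(H, P, ℳ)` can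
return the total assignment `R`: either all symbols are assigned, or some
unassigned symbol `f` gets a program `p` read off (at the node of one of its
occurrences) from a hierarchical tree accepted by the current HFTA such that
propagating `p` yields an HFTA with non-empty language, and the recursive call
returns `R`. -/
inductive FPRet {op val bop Q F₀ : Type} [DecidableEq F₀]
    (occNodes : F₀ → Set (List ℕ)) :
    HFTA (Alpha op val bop) Q → (F₀ → Option (Tree (Alpha op val bop))) →
    (F₀ → Tree (Alpha op val bop)) → Prop where
  | done (H : HFTA (Alpha op val bop) Q) (P : F₀ → Option (Tree (Alpha op val bop)))
      (R : F₀ → Tree (Alpha op val bop)) :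
      (∀ f, P f = some (R f)) → FPRet occNodes H P R
  | step (H : HFTA (Alpha op val bop) Q) (P : F₀ → Option (Tree (Alpha op val bop)))
      (R : F₀ → Tree (Alpha op val bop)) (f : F₀) (v : List ℕ)
      (p : Tree (Alpha op val bop)) (T : List ℕ → Tree (Alpha op val bop)) :
      P f = none →
      v ∈ occNodes f →
      HAccepts H T →
      T v = p →
      (∃ T', HAccepts (propagate H p (occNodes f)) T') →
      FPRet occNodes (propagate H p (occNodes f)) (Function.update P f (some p)) R →
      FPRet occNodes H P R

/-- The inductive synthesis phase of Algorithm 1 (lines 8--11): relax the ground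
specification `Φ`, build the HFTA for the relaxed specification (rules
Const/Func/Logical/Neg followed by the Final rule), and run `FindProgs` on it
starting from the everywhere-unassigned map, obtaining programs `R`. -/
def InductiveSynth {op val bop ν F₀ : Type} [Inhabited val] [DecidableEq F₀]
    (G : F₀ → Grammar op ν) (sem : op → List val → val) (bsem : bop → val → val → val)
    (nsem : val → val) (vtrue vfalse : val)
    (Φ : GS F₀ val bop) (R : F₀ → Tree (Alpha op val bop)) : Prop :=
  ∃ (F : Type) (Mi : F → F₀) (Φ' : GS F val bop) (H' : HFTA (Alpha op val bop) (TQ ν val)),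
    Relax Mi Φ Φ' ∧ OccursOnce Φ' ∧
    BuildsH (fun f' => G (Mi f')) sem bsem nsem vtrue vfalse Φ' H' ∧
    FPRet (fun f => {v | ∃ f' : F, Mi f' = f ∧ OccursAt Φ' f' v})
      (finalize vtrue H') (fun _ => none) R

/-- Returning traces of the CEGIS loop `Synthesize` (Algorithm 1).
`SynthRet … P Φ R` holds iff, starting from candidate programs `P` and
accumulated ground specification `Φ`, the loop can return the programs `R`:
either the current candidates verify against the relational specification `Ψ`,
or a new relational counterexample `Ψ σ` (an instantiation of the universal
quantifiers of `Ψ` violated by `P`) is conjoined to `Φ` and inductive synthesis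
produces new candidates. -/
inductive SynthRet {op val bop ν F₀ : Type} [Inhabited val] [DecidableEq F₀]
    (G : F₀ → Grammar op ν) (sem : op → List val → val) (bsem : bop → val → val → val)
    (nsem : val → val) (vtrue vfalse : val) (andOp : bop)
    (Ψ : (ℕ → val) → GS F₀ val bop)
    (verify : (F₀ → Tree (Alpha op val bop)) → Prop) :
    (F₀ → Tree (Alpha op val bop)) → GS F₀ val bop → (F₀ → Tree (Alpha op val bop)) → Prop where
  | verified (P : F₀ → Tree (Alpha op val bop)) (Φ : GS F₀ val bop) :
      verify P →
      SynthRet G sem bsem nsem vtrue vfalse andOp Ψ verify P Φ P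
  | refine (P P' R : F₀ → Tree (Alpha op val bop)) (Φ : GS F₀ val bop) (σ : ℕ → val) :
      ¬ verify P →
      ¬ Satisfies sem bsem nsem vtrue P (Ψ σ) →
      InductiveSynth G sem bsem nsem vtrue vfalse (GS.bin andOp Φ (Ψ σ)) P' →
      SynthRet G sem bsem nsem vtrue vfalse andOp Ψ verify P' (GS.bin andOp Φ (Ψ σ)) R →
      SynthRet G sem bsem nsem vtrue vfalse andOp Ψ verify P Φ R



/-! ### Auxiliary machinery for the soundness proof -/

/-- Remove the node tag from a state. -/
def untag {ν val : Type} (q : TQ ν val) : TQ ν val := (q.1.tail, q.2)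

@[simp] lemma untag_tagState {ν val : Type} (i : ℕ) (q : TQ ν val) :
    untag (tagState i q) = q := rfl

/-- A run of a mapped FTA yields a run of the original FTA, given a left inverse. -/
lemma runFrom_map_inv {op val bop Q Q' : Type} (g : Q → Q') (u : Q' → Q)
    (hgu : ∀ q, u (g q) = q) (A : FTA (Alpha op val bop) Q)
    (L : ℕ → Q') {t : Tree (Alpha op val bop)} {q' : Q'}
    (h : RunFrom (mapFTA g A) L t q') :
    RunFrom A (fun i => u (L i)) t (u q') := by
  induction h with
  | node a ts qs q htr hleaf hlen hall ih =>
    obtain ⟨a', qs', q₀, htr', heq⟩ := htr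
    simp only [Prod.mk.injEq] at heq
    obtain ⟨rfl, rfl, rfl⟩ := heq
    rw [hgu]
    refine RunFrom.node _ ts qs' q₀ htr' ?_ ?_ ?_
    · intro i hi
      rw [← hleaf i hi, hgu]
    · simpa using hlen
    · intro p hp
      obtain ⟨j, hj, rfl⟩ := List.getElem_of_mem hp
      have hj1 : j < ts.length := by
        have := hj; rw [List.length_zip] at this; omega
      have hj2 : j < (qs'.map g).length := by
        have := hj; rw [List.length_zip] at this; simp at this ⊢; omega
      have hmem : (ts[j], (qs'.map g)[j]) ∈ ts.zip (qs'.map g) := by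
        have : (ts.zip (qs'.map g))[j]'(by rw [List.length_zip]; omega)
            = (ts[j], (qs'.map g)[j]) := List.getElem_zip ..
        rw [← this]; exact List.getElem_mem _
      have := ih _ hmem
      simp only [List.getElem_zip, List.getElem_map] at this ⊢
      rw [hgu] at this
      exact this

/-- Variable `xᵢ` occurs in a tree. -/
inductive VarIn {op val bop : Type} (i : ℕ) : Tree (Alpha op val bop) → Prop where
  | here (ts : List (Tree (Alpha op val bop))) : VarIn i (Tree.node (Alpha.var i) ts)
  | child (a : Alpha op val bop) (ts : List (Tree (Alpha op val bop)))
      (t : Tree (Alpha op val bop)) : t ∈ ts → VarIn i t → VarIn i (Tree.node a ts)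

/-- If `xᵢ` occurs in the tree, any run uses a transition on `xᵢ` targeting `leaf i`. -/
lemma varIn_run {op val bop Q : Type} {A : FTA (Alpha op val bop) Q} {L : ℕ → Q}
    {i : ℕ} {t : Tree (Alpha op val bop)} {q : Q}
    (hv : VarIn i t) (h : RunFrom A L t q) :
    ∃ qs, (Alpha.var i, qs, L i) ∈ A.trans := by
  induction hv generalizing q with
  | here ts =>
    cases h with
    | node a ts qs q htr hleaf hlen hall =>
      exact ⟨qs, hleaf i rfl ▸ htr⟩
  | child a ts t hmem hvt ih =>
    cases h with
    | node _ _ qs q htr hleaf hlen hall =>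
      obtain ⟨j, hj, rfl⟩ := List.getElem_of_mem hmem
      have hjz : j < (ts.zip qs).length := by
        rw [List.length_zip]; omega
      have := hall ((ts.zip qs)[j]) (List.getElem_mem hjz)
      rw [List.getElem_zip] at this
      exact ih this

/-- Recover zip membership from `getElem?` on the second list. -/
lemma mem_zip_of_getElem? {α β : Type*} {l₁ : List α} {l₂ : List β}
    (hlen : l₁.length = l₂.length) {i : ℕ} {b : β} (h : l₂[i]? = some b) :
    ∃ a, l₁[i]? = some a ∧ (a, b) ∈ l₁.zip l₂ := by
  have hi2 : i < l₂.length := by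
    by_contra hc
    rw [List.getElem?_eq_none (by omega)] at h
    cases h
  have hi1 : i < l₁.length := by omega
  refine ⟨l₁[i], List.getElem?_eq_getElem hi1, ?_⟩
  have hb : l₂[i] = b := by
    rw [List.getElem?_eq_getElem hi2] at h
    injection h
  have : (l₁.zip l₂)[i]'(by rw [List.length_zip]; omega) = (l₁[i], l₂[i]) :=
    List.getElem_zip ..
  rw [← hb, ← this]
  exact List.getElem_mem _

/-- A run of `buildFTA` reaching state `q` derives the tree from symbol `q.1`. -/
lemma run_derives {op val bop ν : Type} {G : Grammar op ν} {sem : op → List val → val}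
    {m : ℕ} {init : ℕ → Set val} {L : ℕ → SymT ν × val} {t : Tree (Alpha op val bop)}
    {q : SymT ν × val}
    (h : RunFrom (buildFTA bop G sem m init) L t q) : Derives G q.1 t := by
  induction h with
  | node a ts qs q htr hleaf hlen hall ih =>
    cases htr with
    | input i c hi hc =>
      have hts : ts = [] := List.eq_nil_of_length_eq_zero (by simpa using hlen)
      subst hts
      exact Derives.var i
    | prod s o ss cs hp hl hst =>
      refine Derives.prod s o ss ts hp ?_ ?_
      · rw [hlen, List.length_zip, hl, min_self]
      · intro p hp'
        obtain ⟨j, hj, rfl⟩ := List.getElem_of_mem hp'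
        have hj1 : j < ss.length := by
          have := hj; rw [List.length_zip] at this; omega
        have hj2 : j < ts.length := by
          have := hj; rw [List.length_zip] at this; omega
        have hj3 : j < (ss.zip cs).length := by
          rw [List.length_zip]; omega
        have hjz : j < (ts.zip (ss.zip cs)).length := by
          rw [List.length_zip]; omega
        have hmem : (ts[j], (ss.zip cs)[j]) ∈ ts.zip (ss.zip cs) := by
          have : (ts.zip (ss.zip cs))[j]'hjz = (ts[j], (ss.zip cs)[j]) := List.getElem_zip ..
          rw [← this]; exact List.getElem_mem _
        have := ih _ hmem
        simp only [List.getElem_zip] at this ⊢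
        exact this

/-- A run of `buildFTA` evaluates the tree to the value of its final state. -/
lemma run_evals {op val bop ν : Type} {G : Grammar op ν} {sem : op → List val → val}
    (bsem : bop → val → val → val) (nsem : val → val) {m : ℕ}
    {init : ℕ → Set val} {L : ℕ → SymT ν × val} (args : ℕ → val)
    {t : Tree (Alpha op val bop)} {q : SymT ν × val}
    (h : RunFrom (buildFTA bop G sem m init) L t q)
    (hargs : ∀ i, VarIn i t → args i = (L i).2) :
    EvalsTo sem bsem nsem args t q.2 := by
  induction h with
  | node a ts qs q htr hleaf hlen hall ih =>
    cases htr with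
    | input i c hi hc =>
      have hts : ts = [] := List.eq_nil_of_length_eq_zero (by simpa using hlen)
      subst hts
      have h1 : args i = (L i).2 := hargs i (VarIn.here _)
      have h3 := hleaf i rfl
      have h4 : args i = c := by rw [h1, ← h3]
      have := EvalsTo.var (sem := sem) (bsem := bsem) (nsem := nsem) (args := args) i
      rw [h4] at this
      exact this
    | prod s o ss cs hp hl hst =>
      refine EvalsTo.dsl o ts cs ?_ ?_
      · rw [hlen, List.length_zip, hl, min_self]
      · intro p hp'
        obtain ⟨j, hj, rfl⟩ := List.getElem_of_mem hp'
        have hj1 : j < cs.length := by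
          have := hj; rw [List.length_zip] at this; omega
        have hj2 : j < ts.length := by
          have := hj; rw [List.length_zip] at this; omega
        have hj3 : j < (ss.zip cs).length := by
          rw [List.length_zip]; omega
        have hjz : j < (ts.zip (ss.zip cs)).length := by
          rw [List.length_zip]; omega
        have hmem : (ts[j], (ss.zip cs)[j]) ∈ ts.zip (ss.zip cs) := by
          have : (ts.zip (ss.zip cs))[j]'hjz = (ts[j], (ss.zip cs)[j]) := List.getElem_zip ..
          rw [← this]; exact List.getElem_mem _
        have := ih _ hmem (fun i hvi => hargs i (VarIn.child _ ts ts[j]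
          (List.getElem_mem hj2) hvi))
        simp only [List.getElem_zip] at this ⊢
        exact this

/-- Evaluation is deterministic. -/
lemma evalsTo_det {op val bop : Type} {sem : op → List val → val}
    {bsem : bop → val → val → val} {nsem : val → val} {args : ℕ → val}
    {t : Tree (Alpha op val bop)} {c c' : val}
    (h : EvalsTo sem bsem nsem args t c) (h' : EvalsTo sem bsem nsem args t c') :
    c = c' := by
  induction h generalizing c' with
  | var i => cases h'; rfl
  | cst c => cases h'; rfl
  | dsl o ts cs hlen hall ih =>
    cases h' with
    | dsl _ _ cs' hlen' hall' =>
      have : cs = cs' := by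
        refine List.ext_getElem (by omega) ?_
        intro j hj hj'
        have hjt : j < ts.length := by omega
        have hm : (ts[j], cs[j]) ∈ ts.zip cs := by
          have : (ts.zip cs)[j]'(by rw [List.length_zip]; omega) = (ts[j], cs[j]) :=
            List.getElem_zip ..
          rw [← this]; exact List.getElem_mem _
        have hm' : (ts[j], cs'[j]) ∈ ts.zip cs' := by
          have : (ts.zip cs')[j]'(by rw [List.length_zip]; omega) = (ts[j], cs'[j]) :=
            List.getElem_zip ..
          rw [← this]; exact List.getElem_mem _
        exact ih _ hm (hall' _ hm')
      rw [this]
  | lop b t₁ t₂ c₁ c₂ h₁ h₂ ih₁ ih₂ =>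
    cases h' with
    | lop _ _ _ c₁' c₂' h₁' h₂' => rw [ih₁ h₁', ih₂ h₂']
  | neg t c h ih =>
    cases h' with
    | neg _ c' h'' => rw [ih h'']

/-- Specification evaluation is deterministic. -/
lemma specEval_det {op val bop F : Type} [Inhabited val] {sem : op → List val → val}
    {bsem : bop → val → val → val} {nsem : val → val}
    {I : F → Tree (Alpha op val bop)} {ψ : GS F val bop} {c c' : val}
    (h : SpecEval sem bsem nsem I ψ c) (h' : SpecEval sem bsem nsem I ψ c') :
    c = c' := by
  induction h generalizing c' with
  | cst c => cases h'; rfl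
  | app f ts cs c hlen hall hev ih =>
    cases h' with
    | app _ _ cs' d hlen' hall' hev' =>
      have hcs : cs = cs' := by
        refine List.ext_getElem (by omega) ?_
        intro j hj hj'
        have hm : (ts[j]'(by omega), cs[j]) ∈ ts.zip cs := by
          have : (ts.zip cs)[j]'(by rw [List.length_zip]; omega) =
              (ts[j]'(by omega), cs[j]) := List.getElem_zip ..
          rw [← this]; exact List.getElem_mem _
        have hm' : (ts[j]'(by omega), cs'[j]) ∈ ts.zip cs' := by
          have : (ts.zip cs')[j]'(by rw [List.length_zip]; omega) =
              (ts[j]'(by omega), cs'[j]) := List.getElem_zip ..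
          rw [← this]; exact List.getElem_mem _
        exact ih _ hm (hall' _ hm')
      subst hcs
      exact evalsTo_det hev hev'
  | bin b ψ₁ ψ₂ c₁ c₂ h₁ h₂ ih₁ ih₂ =>
    cases h' with
    | bin _ _ _ c₁' c₂' h₁' h₂' => rw [ih₁ h₁', ih₂ h₂']
  | neg ψ c h ih =>
    cases h' with
    | neg _ d h'' => rw [ih h'']

/-- Structural invariants of HFTAs produced by the construction. -/
def GoodH {op val bop ν : Type} (H : HFTA (Alpha op val bop) (TQ ν val)) : Prop :=
  ([] ∈ H.nodes) ∧
  (∀ v ∈ H.nodes, ∀ (j : ℕ) (v' : List ℕ), (H.children v)[j]? = some v' → v' ∈ H.nodes) ∧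
  (∀ (v : List ℕ) (q : TQ ν val), q ∈ (H.fta v).finals → q.1 = v) ∧
  (∀ (v : List ℕ) (j : ℕ), (H.children v)[j]? ≠ some ([] : List ℕ))

lemma goodH_combine {op val bop ν : Type} {A : FTA (Alpha op val bop) (SymT ν × val)}
    {Hs : List (HFTA (Alpha op val bop) (TQ ν val))}
    (hHs : ∀ (i : ℕ) (Hc), Hs[i]? = some Hc → GoodH Hc) :
    GoodH (combine A Hs) := by
  refine ⟨Or.inl rfl, ?_, ?_, ?_⟩
  · intro v hv j v' hj
    match v, hv with
    | [], _ =>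
      simp only [combine, List.getElem?_map] at hj
      rcases hget : (List.range Hs.length)[j]? with _ | k
      · rw [hget] at hj; cases hj
      · rw [hget] at hj
        have hk : k < Hs.length ∧ k = j := by
          have h1 := List.mem_of_getElem? hget
          rw [List.mem_range] at h1
          have h2 : j < Hs.length := by
            by_contra hc
            rw [List.getElem?_eq_none (by simpa using hc)] at hget; cases hget
          rw [List.getElem?_eq_getElem (by simpa using h2)] at hget
          injection hget with hget
          simp at hget
          exact ⟨h1, hget.symm⟩
        obtain ⟨hk1, rfl⟩ := hk
        obtain ⟨Hc, hHc⟩ : ∃ Hc, Hs[k]? = some Hc :=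
          ⟨Hs[k], List.getElem?_eq_getElem hk1⟩
        injection hj with hj
        exact Or.inr ⟨k, Hc, [], hHc, (hHs k Hc hHc).1, by rw [← hj]⟩
    | i :: w, hv =>
      rcases hv with h | ⟨i₀, Hc, w₀, hs₀, hn₀, heq⟩
      · cases h
      · injection heq with h1 h2
        subst h1; subst h2
        simp only [combine, hs₀, List.getElem?_map] at hj
        rcases hget : (Hc.children w)[j]? with _ | w'
        · rw [hget] at hj; cases hj
        · rw [hget] at hj
          injection hj with hj
          exact Or.inr ⟨i, Hc, w', hs₀, (hHs i Hc hs₀).2.1 w hn₀ j w' hget, by rw [← hj]⟩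
  · intro v q hq
    match v with
    | [] =>
      obtain ⟨r, hr, hre⟩ := hq
      rw [← hre]
    | i :: w =>
      rcases hget : Hs[i]? with _ | Hc
      · simp only [combine, hget] at hq
        cases hq
      · simp only [combine, hget] at hq
        obtain ⟨r, hr, hre⟩ := hq
        have := (hHs i Hc hget).2.2.1 w r hr
        rw [← hre, tagState, this]
  · intro v j hj
    match v with
    | [] =>
      simp only [combine, List.getElem?_map] at hj
      rcases hget : (List.range Hs.length)[j]? with _ | k
      · rw [hget] at hj; cases hj
      · rw [hget] at hj; cases hj
    | i :: w =>
      rcases hget : Hs[i]? with _ | Hc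
      · simp only [combine, hget] at hj; cases hj
      · simp only [combine, hget, List.getElem?_map] at hj
        rcases hget2 : (Hc.children w)[j]? with _ | w'
        · rw [hget2] at hj; cases hj
        · rw [hget2] at hj; cases hj

lemma buildsH_good {op val bop ν F : Type} {gram : F → Grammar op ν}
    {sem : op → List val → val} {bsem : bop → val → val → val} {nsem : val → val}
    {vtrue vfalse : val} {ψ : GS F val bop} {H : HFTA (Alpha op val bop) (TQ ν val)}
    (hb : BuildsH gram sem bsem nsem vtrue vfalse ψ H) : GoodH H := by
  induction hb with
  | cst c =>
    refine goodH_combine ?_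
    intro i Hc h
    simp at h
  | app f ts Hs hlen hall ih =>
    refine goodH_combine ?_
    intro i Hc h
    obtain ⟨a, -, hmem⟩ := mem_zip_of_getElem? hlen h
    exact ih _ hmem
  | bin b ψ₁ ψ₂ H₁ H₂ hb₁ hb₂ ih₁ ih₂ =>
    refine goodH_combine ?_
    intro i Hc h
    match i, h with
    | 0, h => injection h with h; rw [← h]; exact ih₁
    | 1, h => injection h with h; rw [← h]; exact ih₂
  | neg ψ H₁ hb₁ ih₁ =>
    refine goodH_combine ?_
    intro i Hc h
    match i, h with
    | 0, h => injection h with h; rw [← h]; exact ih₁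

/-- Acceptance of a combined HFTA restricts to acceptance of each child HFTA. -/
lemma combine_child {op val bop ν : Type} {A : FTA (Alpha op val bop) (SymT ν × val)}
    {Hs : List (HFTA (Alpha op val bop) (TQ ν val))}
    (hHs : ∀ (i : ℕ) (Hc), Hs[i]? = some Hc → GoodH Hc)
    {T : List ℕ → Tree (Alpha op val bop)} {ρ : List ℕ → TQ ν val}
    {leaf : List ℕ → ℕ → TQ ν val}
    (hacc : HAcceptWith (combine A Hs) T ρ leaf) (i : ℕ)
    (H : HFTA (Alpha op val bop) (TQ ν val)) (hi : Hs[i]? = some H) :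
    HAcceptWith H (fun v => T (i :: v)) (fun v => untag (ρ (i :: v)))
      (fun v j => untag (leaf (i :: v) j)) := by
  intro v hv
  have hvC : (i :: v) ∈ (combine A Hs).nodes := Or.inr ⟨i, H, v, hi, hv, rfl⟩
  obtain ⟨hfin, hrun, hint⟩ := hacc (i :: v) hvC
  have hfta : (combine A Hs).fta (i :: v) = mapFTA (tagState i) (H.fta v) := by
    simp only [combine, hi]
  rw [hfta] at hfin hrun
  obtain ⟨r, hr, hre⟩ := hfin
  refine ⟨?_, ?_, ?_⟩
  · show untag (ρ (i :: v)) ∈ (H.fta v).finals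
    rw [← hre, untag_tagState]; exact hr
  · show RunFrom (H.fta v) (fun j => untag (leaf (i :: v) j)) (T (i :: v)) (untag (ρ (i :: v)))
    exact runFrom_map_inv (tagState i) untag (fun q => rfl) _ _ hrun
  · intro j v' hj
    show (untag (ρ (i :: v')), untag (leaf (i :: v) j)) ∈ H.inter
    have hv' : v' ∈ H.nodes := (hHs i H hi).2.1 v hv j v' hj
    have hvC' : (i :: v') ∈ (combine A Hs).nodes := Or.inr ⟨i, H, v', hi, hv', rfl⟩
    obtain ⟨hfin', -, -⟩ := hacc (i :: v') hvC'
    have hfta' : (combine A Hs).fta (i :: v') = mapFTA (tagState i) (H.fta v') := by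
      simp only [combine, hi]
    rw [hfta'] at hfin'
    obtain ⟨r', hr', hre'⟩ := hfin'
    have hjC : ((combine A Hs).children (i :: v))[j]? = some (i :: v') := by
      simp only [combine, hi, List.getElem?_map, hj, Option.map_some]
    have hmem := hint j (i :: v') hjC
    rcases hmem with hl | hrr
    · obtain ⟨i₀, H₀, q, q', hs₀, hq, heq⟩ := hl
      have h1 : ρ (i :: v') = tagState i₀ q := congrArg Prod.fst heq
      have h2 : leaf (i :: v) j = tagState i₀ q' := congrArg Prod.snd heq
      have hii : i₀ = i ∧ q = r' := by
        rw [← hre'] at h1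
        simp only [tagState, Prod.mk.injEq, List.cons.injEq] at h1
        obtain ⟨⟨hh1, hh2⟩, hh3⟩ := h1
        exact ⟨hh1.symm, Prod.ext hh2.symm hh3.symm⟩
      obtain ⟨rfl, rfl⟩ := hii
      have hH₀ : H₀ = H := by rw [hi] at hs₀; injection hs₀ with h; exact h.symm
      rw [← hre', h2, untag_tagState, untag_tagState]
      rw [hH₀] at hq
      exact hq
    · exfalso
      obtain ⟨i₀, H₀, q, hs₀, hq, heq⟩ := hrr
      have h1 : ρ (i :: v') = tagState i₀ q := congrArg Prod.fst heq
      have hii : i₀ = i ∧ q = r' := by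
        rw [← hre'] at h1
        simp only [tagState, Prod.mk.injEq, List.cons.injEq] at h1
        obtain ⟨⟨hh1, hh2⟩, hh3⟩ := h1
        exact ⟨hh1.symm, Prod.ext hh2.symm hh3.symm⟩
      have hH₀ : H₀ = H := by rw [hii.1, hi] at hs₀; injection hs₀ with h; exact h.symm
      rw [hH₀, hii.2] at hq
      have hv'nil : v' = [] := by
        have e1 := (hHs i H hi).2.2.1 v' r' hr'
        have e2 := (hHs i H hi).2.2.1 [] r' hq
        rw [e2] at e1; exact e1.symm
      rw [hv'nil] at hj
      exact (hHs i H hi).2.2.2 v j hj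

/-- Top-level inter-FTA transition analysis for a combined HFTA. -/
lemma combine_top {op val bop ν : Type} {A : FTA (Alpha op val bop) (SymT ν × val)}
    {Hs : List (HFTA (Alpha op val bop) (TQ ν val))}
    {T : List ℕ → Tree (Alpha op val bop)} {ρ : List ℕ → TQ ν val}
    {leaf : List ℕ → ℕ → TQ ν val}
    (hacc : HAcceptWith (combine A Hs) T ρ leaf)
    (i : ℕ) (hi : i < Hs.length)
    (hA : ∀ (qs : List (SymT ν × val)) (q : SymT ν × val),
        (Alpha.var i, qs, q) ∈ A.trans → q.1 = SymT.var i)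
    (hvi : VarIn i (T [])) :
    ∃ Hc q, Hs[i]? = some Hc ∧ q ∈ (Hc.fta []).finals ∧
      leaf [] i = ([], SymT.var i, q.2.2) ∧ ρ [i] = tagState i q := by
  obtain ⟨hfin, hrun, hint⟩ := hacc [] (Or.inl rfl)
  have hfta0 : (combine A Hs).fta [] =
      mapFTA (fun q => (([] : List ℕ), q)) A := rfl
  rw [hfta0] at hrun
  obtain ⟨qs, htr⟩ := varIn_run hvi hrun
  obtain ⟨a', qs', q₀, htr', heq⟩ := htr
  simp only [Prod.mk.injEq] at heq
  obtain ⟨ha', hqs', hle⟩ := heq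
  have hq₀ : q₀.1 = SymT.var i := hA qs' q₀ (by rw [ha']; exact htr')
  have hjC : ((combine A Hs).children [])[i]? = some [i] := by
    simp only [combine, List.getElem?_map, List.getElem?_range, hi, if_pos,
      Option.map_some]
  have hmem := hint i [i] hjC
  rcases hmem with hl | hrr
  · exfalso
    obtain ⟨i₀, H₀, q, q', hs₀, hq, heq⟩ := hl
    have h2 : leaf [] i = tagState i₀ q' := congrArg Prod.snd heq
    rw [h2] at hle
    simp only [tagState, Prod.mk.injEq] at hle
    cases hle.1
  · obtain ⟨i₀, H₀, q, hs₀, hq, heq⟩ := hrr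
    have h1 : ρ [i] = tagState i₀ q := congrArg Prod.fst heq
    have h2 : leaf [] i = (([] : List ℕ), SymT.var i₀, q.2.2) := congrArg Prod.snd heq
    have hii : i₀ = i := by
      rw [h2] at hle
      simp only [Prod.mk.injEq] at hle
      have := hle.2
      rw [← this] at hq₀
      have h3 : i = i₀ := by simpa using hq₀.symm
      exact h3.symm
    subst hii
    exact ⟨H₀, q, hs₀, hq, h2, h1⟩

/-- Inversion for variable transitions of `buildFTA`. -/
lemma btrans_var_inv {op val bop ν : Type} {G : Grammar op ν} {sem : op → List val → val}
    {m : ℕ} {init : ℕ → Set val} {k : ℕ} {qs : List (SymT ν × val)} {q : SymT ν × val}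
    (h : BTrans bop G sem m init (Alpha.var k, qs, q)) :
    k < m ∧ ∃ c, c ∈ init k ∧ q = (SymT.var k, c) := by
  cases h with
  | input i c hi hc => exact ⟨hi, c, hc, rfl⟩

/-- Inversion: a `logicFTA` run reaching a variable state reads off the variable leaf. -/
lemma logic_run_var {op val bop ν : Type} {vtrue vfalse : val}
    {bsem : bop → val → val → val} {b : bop} {C₁ C₂ : Set val}
    {L : ℕ → SymT ν × val} {t : Tree (Alpha op val bop)} {q : SymT ν × val} {i : ℕ}
    (h : RunFrom (logicFTA vtrue vfalse bsem b C₁ C₂) L t q) (hq : q.1 = SymT.var i) :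
    t = Tree.node (Alpha.var i) [] ∧ L i = q := by
  cases h with
  | node a ts qs q htr hleaf hlen hall =>
    simp only [logicFTA, Set.mem_union, Set.mem_setOf_eq] at htr
    rcases htr with (⟨c', hc', heq⟩ | ⟨c', hc', heq⟩) | ⟨c₁, hc₁, c₂, hc₂, heq⟩ <;>
      simp only [Prod.mk.injEq] at heq
    · obtain ⟨ha, hqs, hqe⟩ := heq
      rw [hqe] at hq
      have hi : i = 0 := by simpa using hq.symm
      subst hi
      have hts : ts = [] := List.eq_nil_of_length_eq_zero (by rw [hlen, hqs]; rfl)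
      subst hts
      rw [ha]
      exact ⟨rfl, (hleaf 0 ha).symm⟩
    · obtain ⟨ha, hqs, hqe⟩ := heq
      rw [hqe] at hq
      have hi : i = 1 := by simpa using hq.symm
      subst hi
      have hts : ts = [] := List.eq_nil_of_length_eq_zero (by rw [hlen, hqs]; rfl)
      subst hts
      rw [ha]
      exact ⟨rfl, (hleaf 1 ha).symm⟩
    · exfalso
      rw [heq.2.2] at hq
      simp at hq

/-- Inversion: a `negFTA` run reaching a variable state reads off the variable leaf. -/
lemma neg_run_var {op val bop ν : Type} {vtrue vfalse : val}
    {nsem : val → val} {C : Set val}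
    {L : ℕ → SymT ν × val} {t : Tree (Alpha op val bop)} {q : SymT ν × val} {i : ℕ}
    (h : RunFrom (negFTA vtrue vfalse nsem C) L t q) (hq : q.1 = SymT.var i) :
    t = Tree.node (Alpha.var i) [] ∧ L i = q := by
  cases h with
  | node a ts qs q htr hleaf hlen hall =>
    simp only [negFTA, Set.mem_union, Set.mem_setOf_eq] at htr
    rcases htr with ⟨c', hc', heq⟩ | ⟨c', hc', heq⟩ <;>
      simp only [Prod.mk.injEq] at heq
    · obtain ⟨ha, hqs, hqe⟩ := heq
      rw [hqe] at hq
      have hi : i = 0 := by simpa using hq.symm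
      subst hi
      have hts : ts = [] := List.eq_nil_of_length_eq_zero (by rw [hlen, hqs]; rfl)
      subst hts
      rw [ha]
      exact ⟨rfl, (hleaf 0 ha).symm⟩
    · exfalso
      rw [heq.2.2] at hq
      simp at hq

/-- Main soundness lemma, proved by induction on the HFTA construction. -/
lemma mainSound {op val bop ν F : Type} [Inhabited val]
    (gram : F → Grammar op ν)
    (sem : op → List val → val) (bsem : bop → val → val → val) (nsem : val → val)
    (vtrue vfalse : val)
    {ψ : GS F val bop} {H : HFTA (Alpha op val bop) (TQ ν val)}
    (hb : BuildsH gram sem bsem nsem vtrue vfalse ψ H) :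
    ∀ (T : List ℕ → Tree (Alpha op val bop)) (ρ : List ℕ → TQ ν val)
      (leaf : List ℕ → ℕ → TQ ν val), HAcceptWith H T ρ leaf →
      (∀ (f : F) (p : List ℕ), OccursAt ψ f p → ConformsTo (gram f) (T p)) ∧
      (∀ I : F → Tree (Alpha op val bop),
        (∀ (f : F) (p : List ℕ), OccursAt ψ f p → I f = T p) →
        SpecEval sem bsem nsem I ψ ((ρ []).2.2)) := by
  induction hb with
  | cst c =>
    intro T ρ leaf hacc
    obtain ⟨hfin, hrun, -⟩ := hacc [] (Or.inl rfl)
    obtain ⟨r, hr, hre⟩ := hfin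
    constructor
    · intro f p hocc; cases hocc
    · intro I hI
      have hrc : r = (SymT.start, c) := hr
      have hv : (ρ []).2.2 = c := by rw [← hre, hrc]
      rw [hv]
      exact SpecEval.cst c
  | app f ts Hs hlen hall ih =>
    intro T ρ leaf hacc
    have hGood : ∀ (j : ℕ) (Hc : HFTA (Alpha op val bop) (TQ ν val)),
        Hs[j]? = some Hc → GoodH Hc := by
      intro j Hc hj
      obtain ⟨a, -, hmem⟩ := mem_zip_of_getElem? hlen hj
      exact buildsH_good (hall _ hmem)
    obtain ⟨hfin, hrun, -⟩ := hacc [] (Or.inl rfl)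
    obtain ⟨q₀, hq₀, hre⟩ := hfin
    have hrun' : RunFrom (buildFTA bop (gram f) sem ts.length (initsOf Hs))
        (fun k => (leaf [] k).2) (T []) ((ρ []).2) :=
      runFrom_map_inv (fun q => (([] : List ℕ), q)) Prod.snd (fun q => rfl) _ _ hrun
    have htop : ∀ k, VarIn k (T []) →
        k < Hs.length ∧ (leaf [] k).2 = (SymT.var k, (ρ [k]).2.2) := by
      intro k hvk
      obtain ⟨qs, htr⟩ := varIn_run hvk hrun'
      obtain ⟨hk, c, hc, hq⟩ := btrans_var_inv htr
      have hkH : k < Hs.length := by omega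
      have hA : ∀ (qs' : List (SymT ν × val)) (q' : SymT ν × val),
          (Alpha.var k, qs', q') ∈
            (buildFTA bop (gram f) sem ts.length (initsOf Hs)).trans →
          q'.1 = SymT.var k := by
        intro qs' q' h'
        obtain ⟨-, c', -, hq'⟩ := btrans_var_inv h'
        rw [hq']
      obtain ⟨Hc, q, hsome, hqf, hle, hrho⟩ := combine_top hacc k hkH hA hvk
      refine ⟨hkH, ?_⟩
      rw [show leaf [] k = (([] : List ℕ), SymT.var k, q.2.2) from hle, hrho]
      rfl
    constructor
    · intro g p hocc
      cases hocc with
      | here _ _ =>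
        have hd := run_derives hrun'
        have he : (ρ []).2 = q₀ := by rw [← hre]
        rw [he, hq₀.2] at hd
        exact hd
      | app _ g' _ j t' p' hj ho =>
        have hjt : j < ts.length := by
          by_contra hc
          rw [List.getElem?_eq_none (by omega)] at hj; cases hj
        have hjH : j < Hs.length := by omega
        have hHsj : Hs[j]? = some (Hs[j]) := List.getElem?_eq_getElem hjH
        obtain ⟨a, ha, hmem⟩ := mem_zip_of_getElem? hlen hHsj
        have hchild := combine_child hGood hacc j (Hs[j]) hHsj
        have htj : a = t' := by rw [ha] at hj; injection hj
        exact (ih _ hmem _ _ _ hchild).1 g p' (by rw [htj]; exact ho)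
    · intro I hI
      have hcs : ∀ p ∈ ts.zip ((List.range ts.length).map (fun j => (ρ [j]).2.2)),
          SpecEval sem bsem nsem I p.1 p.2 := by
        intro p hp
        obtain ⟨j, hj, rfl⟩ := List.getElem_of_mem hp
        have hj1 : j < ts.length := by
          have := hj
          rw [List.length_zip, List.length_map, List.length_range] at this; omega
        have hjH : j < Hs.length := by omega
        have hHsj : Hs[j]? = some (Hs[j]) := List.getElem?_eq_getElem hjH
        obtain ⟨a, ha, hmem⟩ := mem_zip_of_getElem? hlen hHsj
        have hchild := combine_child hGood hacc j (Hs[j]) hHsj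
        have hIc : ∀ (g : F) (p' : List ℕ), OccursAt a g p' → I g = T (j :: p') :=
          fun g p' ho => hI g (j :: p') (OccursAt.app f g ts j a p' ha ho)
        have hse := (ih _ hmem _ _ _ hchild).2 I hIc
        have haj : ts[j] = a := by
          rw [List.getElem?_eq_getElem hj1] at ha
          injection ha
        simp only [List.getElem_zip, List.getElem_map, List.getElem_range]
        rw [haj]
        exact hse
      have hIf : I f = T [] := hI f [] (OccursAt.here f ts)
      have heval : EvalsTo sem bsem nsem
          (fun i => ((List.range ts.length).map (fun j => (ρ [j]).2.2)).getD i default)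
          (T []) ((ρ []).2).2 := by
        refine run_evals bsem nsem _ hrun' ?_
        intro k hvk
        obtain ⟨hkH, hlk⟩ := htop k hvk
        have hkt : k < ts.length := by omega
        have hgd : ((List.range ts.length).map (fun j => (ρ [j]).2.2)).getD k default
            = (ρ [k]).2.2 := by
          rw [List.getD_eq_getElem?_getD, List.getElem?_map, List.getElem?_range hkt]
          rfl
        rw [hgd, hlk]
      refine SpecEval.app f ts _ ((ρ []).2.2) (by simp) hcs ?_
      rw [hIf]
      exact heval
  | bin b ψ₁ ψ₂ H₁ H₂ hb₁ hb₂ ih₁ ih₂ =>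
    intro T ρ leaf hacc
    have hGood : ∀ (j : ℕ) (Hc : HFTA (Alpha op val bop) (TQ ν val)),
        ([H₁, H₂] : List _)[j]? = some Hc → GoodH Hc := by
      intro j Hc hj
      match j, hj with
      | 0, hj =>
        simp only [List.getElem?_cons_zero, Option.some.injEq] at hj
        rw [← hj]; exact buildsH_good hb₁
      | 1, hj =>
        simp only [List.getElem?_cons_succ, List.getElem?_cons_zero,
          Option.some.injEq] at hj
        rw [← hj]; exact buildsH_good hb₂
      | (n+2), hj => simp at hj
    have hc₁acc := combine_child hGood hacc 0 H₁ rfl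
    have hc₂acc := combine_child hGood hacc 1 H₂ rfl
    constructor
    · intro g p hocc
      cases hocc with
      | binl _ _ _ _ p' ho => exact (ih₁ _ _ _ hc₁acc).1 g p' ho
      | binr _ _ _ _ p' ho => exact (ih₂ _ _ _ hc₂acc).1 g p' ho
    · intro I hI
      obtain ⟨hfin, hrun, -⟩ := hacc [] (Or.inl rfl)
      obtain ⟨q₀, hq₀, hre⟩ := hfin
      have hrun' : RunFrom (logicFTA vtrue vfalse bsem b (rootVals H₁) (rootVals H₂))
          (fun k => (leaf [] k).2) (T []) ((ρ []).2) :=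
        runFrom_map_inv (fun q => (([] : List ℕ), q)) Prod.snd (fun q => rfl) _ _ hrun
      have he0 : (ρ []).2 = q₀ := by rw [← hre]
      rw [he0] at hrun'
      generalize hT0 : T [] = t0 at hrun'
      cases hrun' with
      | node a ts qs q htr hleaf hlen2 hall2 =>
        simp only [logicFTA, Set.mem_union, Set.mem_setOf_eq] at htr
        have hq₀s : q₀.1 = SymT.start := by
          rcases hq₀ with h | h <;> rw [h]
        rcases htr with (⟨c', hc', heq⟩ | ⟨c', hc', heq⟩) | ⟨c₁, hc₁, c₂, hc₂, heq⟩ <;>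
          simp only [Prod.mk.injEq] at heq
        · exfalso; rw [heq.2.2] at hq₀s; simp at hq₀s
        · exfalso; rw [heq.2.2] at hq₀s; simp at hq₀s
        obtain ⟨ha, hqs, hqe⟩ := heq
        obtain ⟨t₁, t₂, rfl⟩ := List.length_eq_two.mp (by rw [hlen2, hqs]; rfl)
        have hr₁ : RunFrom (logicFTA vtrue vfalse bsem b (rootVals H₁) (rootVals H₂))
            (fun k => (leaf [] k).2) t₁ (SymT.var 0, c₁) := by
          have := hall2 (t₁, (SymT.var 0, c₁)) (by rw [hqs]; simp)
          exact this
        have hr₂ : RunFrom (logicFTA vtrue vfalse bsem b (rootVals H₁) (rootVals H₂))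
            (fun k => (leaf [] k).2) t₂ (SymT.var 1, c₂) := by
          have := hall2 (t₂, (SymT.var 1, c₂)) (by rw [hqs]; simp)
          exact this
        obtain ⟨hT1, hL0⟩ := logic_run_var hr₁ rfl
        obtain ⟨hT2, hL1⟩ := logic_run_var hr₂ rfl
        have hvi0 : VarIn 0 (T []) := by
          rw [hT0]
          refine VarIn.child a [t₁, t₂] t₁ (by simp) ?_
          rw [hT1]
          exact VarIn.here []
        have hvi1 : VarIn 1 (T []) := by
          rw [hT0]
          refine VarIn.child a [t₁, t₂] t₂ (by simp) ?_
          rw [hT2]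
          exact VarIn.here []
        have hA0 : ∀ (qs' : List (SymT ν × val)) (q' : SymT ν × val),
            (Alpha.var 0, qs', q') ∈
              (logicFTA (op := op) (ν := ν) vtrue vfalse bsem b (rootVals H₁) (rootVals H₂)).trans →
            q'.1 = SymT.var 0 := by
          intro qs' q' h'
          simp only [logicFTA, Set.mem_union, Set.mem_setOf_eq] at h'
          rcases h' with (⟨c'', hc'', heq'⟩ | ⟨c'', hc'', heq'⟩) |
              ⟨c₁', hc₁', c₂', hc₂', heq'⟩ <;> simp only [Prod.mk.injEq] at heq'
          · rw [heq'.2.2]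
          · exact absurd heq'.1 (by simp)
          · exact absurd heq'.1 (by simp)
        have hA1 : ∀ (qs' : List (SymT ν × val)) (q' : SymT ν × val),
            (Alpha.var 1, qs', q') ∈
              (logicFTA (op := op) (ν := ν) vtrue vfalse bsem b (rootVals H₁) (rootVals H₂)).trans →
            q'.1 = SymT.var 1 := by
          intro qs' q' h'
          simp only [logicFTA, Set.mem_union, Set.mem_setOf_eq] at h'
          rcases h' with (⟨c'', hc'', heq'⟩ | ⟨c'', hc'', heq'⟩) |
              ⟨c₁', hc₁', c₂', hc₂', heq'⟩ <;> simp only [Prod.mk.injEq] at heq'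
          · exact absurd heq'.1 (by simp)
          · rw [heq'.2.2]
          · exact absurd heq'.1 (by simp)
        obtain ⟨Hc₁, qA, hsome₁, hqf₁, hle₁, hrho₁⟩ :=
          combine_top hacc 0 (by simp) hA0 hvi0
        obtain ⟨Hc₂, qB, hsome₂, hqf₂, hle₂, hrho₂⟩ :=
          combine_top hacc 1 (by simp) hA1 hvi1
        have hc₁v : c₁ = (ρ [0]).2.2 := by
          have e1 : (leaf [] 0).2 = (SymT.var 0, qA.2.2) := by rw [hle₁]
          rw [hL0] at e1
          have : c₁ = qA.2.2 := congrArg Prod.snd e1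
          rw [this, hrho₁]; rfl
        have hc₂v : c₂ = (ρ [1]).2.2 := by
          have e1 : (leaf [] 1).2 = (SymT.var 1, qB.2.2) := by rw [hle₂]
          rw [hL1] at e1
          have : c₂ = qB.2.2 := congrArg Prod.snd e1
          rw [this, hrho₂]; rfl
        have hs₁ : SpecEval sem bsem nsem I ψ₁ c₁ := by
          rw [hc₁v]
          exact (ih₁ _ _ _ hc₁acc).2 I
            (fun g p ho => hI g (0 :: p) (OccursAt.binl b ψ₁ ψ₂ g p ho))
        have hs₂ : SpecEval sem bsem nsem I ψ₂ c₂ := by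
          rw [hc₂v]
          exact (ih₂ _ _ _ hc₂acc).2 I
            (fun g p ho => hI g (1 :: p) (OccursAt.binr b ψ₁ ψ₂ g p ho))
        have hval : (ρ []).2.2 = bsem b c₁ c₂ := by rw [he0, hqe]
        rw [hval]
        exact SpecEval.bin b ψ₁ ψ₂ c₁ c₂ hs₁ hs₂
  | neg ψ' H₁ hb₁ ih₁ =>
    intro T ρ leaf hacc
    have hGood : ∀ (j : ℕ) (Hc : HFTA (Alpha op val bop) (TQ ν val)),
        ([H₁] : List _)[j]? = some Hc → GoodH Hc := by
      intro j Hc hj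
      match j, hj with
      | 0, hj =>
        simp only [List.getElem?_cons_zero, Option.some.injEq] at hj
        rw [← hj]; exact buildsH_good hb₁
      | (n+1), hj => simp at hj
    have hc₁acc := combine_child hGood hacc 0 H₁ rfl
    constructor
    · intro g p hocc
      cases hocc with
      | neg _ _ p' ho => exact (ih₁ _ _ _ hc₁acc).1 g p' ho
    · intro I hI
      obtain ⟨hfin, hrun, -⟩ := hacc [] (Or.inl rfl)
      obtain ⟨q₀, hq₀, hre⟩ := hfin
      have hrun' : RunFrom (negFTA vtrue vfalse nsem (rootVals H₁))
          (fun k => (leaf [] k).2) (T []) ((ρ []).2) :=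
        runFrom_map_inv (fun q => (([] : List ℕ), q)) Prod.snd (fun q => rfl) _ _ hrun
      have he0 : (ρ []).2 = q₀ := by rw [← hre]
      rw [he0] at hrun'
      generalize hT0 : T [] = t0 at hrun'
      cases hrun' with
      | node a ts qs q htr hleaf hlen2 hall2 =>
        simp only [negFTA, Set.mem_union, Set.mem_setOf_eq] at htr
        have hq₀s : q₀.1 = SymT.start := by
          rcases hq₀ with h | h <;> rw [h]
        rcases htr with ⟨c', hc', heq⟩ | ⟨c, hc, heq⟩ <;>
          simp only [Prod.mk.injEq] at heq
        · exfalso; rw [heq.2.2] at hq₀s; simp at hq₀s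
        obtain ⟨ha, hqs, hqe⟩ := heq
        obtain ⟨t₁, rfl⟩ := List.length_eq_one_iff.mp (by rw [hlen2, hqs]; rfl)
        have hr₁ : RunFrom (negFTA vtrue vfalse nsem (rootVals H₁))
            (fun k => (leaf [] k).2) t₁ (SymT.var 0, c) := by
          have := hall2 (t₁, (SymT.var 0, c)) (by rw [hqs]; simp)
          exact this
        obtain ⟨hT1, hL0⟩ := neg_run_var hr₁ rfl
        have hvi0 : VarIn 0 (T []) := by
          rw [hT0]
          refine VarIn.child a [t₁] t₁ (by simp) ?_
          rw [hT1]
          exact VarIn.here []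
        have hA0 : ∀ (qs' : List (SymT ν × val)) (q' : SymT ν × val),
            (Alpha.var 0, qs', q') ∈
              (negFTA (op := op) (bop := bop) (ν := ν) vtrue vfalse nsem (rootVals H₁)).trans →
            q'.1 = SymT.var 0 := by
          intro qs' q' h'
          simp only [negFTA, Set.mem_union, Set.mem_setOf_eq] at h'
          rcases h' with ⟨c'', hc'', heq'⟩ | ⟨c'', hc'', heq'⟩ <;>
            simp only [Prod.mk.injEq] at heq'
          · rw [heq'.2.2]
          · exact absurd heq'.1 (by simp)
        obtain ⟨Hc₁, qA, hsome₁, hqf₁, hle₁, hrho₁⟩ :=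
          combine_top hacc 0 (by simp) hA0 hvi0
        have hc₁v : c = (ρ [0]).2.2 := by
          have e1 : (leaf [] 0).2 = (SymT.var 0, qA.2.2) := by rw [hle₁]
          rw [hL0] at e1
          have : c = qA.2.2 := congrArg Prod.snd e1
          rw [this, hrho₁]; rfl
        have hs₁ : SpecEval sem bsem nsem I ψ' c := by
          rw [hc₁v]
          exact (ih₁ _ _ _ hc₁acc).2 I
            (fun g p ho => hI g (0 :: p) (OccursAt.neg ψ' g p ho))
        have hval : (ρ []).2.2 = nsem c := by rw [he0, hqe]
        rw [hval]
        exact SpecEval.neg ψ' c hs₁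

/-- Soundness of HFTA construction on formulas (Lemma A.3). -/
theorem hfta_formula_soundness
    {op val bop ν F F₀ : Type} [Inhabited val]
    (G : F₀ → Grammar op ν) (Minv : F → F₀)
    (sem : op → List val → val) (bsem : bop → val → val → val) (nsem : val → val)
    (vtrue vfalse : val) (hne : vtrue ≠ vfalse)
    (Φ : GS F val bop) (H : HFTA (Alpha op val bop) (TQ ν val))
    (hform : IsForm Φ) (honce : OccursOnce Φ)
    (hbuild : BuildsH (fun f => G (Minv f)) sem bsem nsem vtrue vfalse Φ H)
    (T : List ℕ → Tree (Alpha op val bop))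
    (ρ : List ℕ → TQ ν val) (leaf : List ℕ → ℕ → TQ ν val)
    (hacc : HAcceptWith H T ρ leaf) :
    (∀ (f : F) (p : List ℕ), OccursAt Φ f p → ConformsTo (G (Minv f)) (T p)) ∧
    (∀ I : F → Tree (Alpha op val bop),
        (∀ (f : F) (p : List ℕ), OccursAt Φ f p → I f = T p) →
        ((ρ []).2 = (SymT.start, vtrue) → Satisfies sem bsem nsem vtrue I Φ) ∧
        ((ρ []).2 = (SymT.start, vfalse) → ¬ Satisfies sem bsem nsem vtrue I Φ)) := by
  have main := mainSound (fun f => G (Minv f)) sem bsem nsem vtrue vfalse hbuild T ρ leaf hacc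
  refine ⟨main.1, ?_⟩
  intro I hI
  have hspec := main.2 I hI
  constructor
  · intro h
    have hv : (ρ []).2.2 = vtrue := by rw [h]
    rw [hv] at hspec
    exact hspec
  · intro h hsat
    have hv : (ρ []).2.2 = vfalse := by rw [h]
    rw [hv] at hspec
    exact hne (specEval_det hsat hspec)

end Relish
end

section
/- Soundness of the CEGIS synthesis algorithm (Theorem 4.3): Assume the verification procedure Verify invoked by the Synthesize algorithm is sound, i.e. Verify(P, Ψ) returns true only if the programs P satisfy the relational specification Ψ. Then whenever the Synthesize procedure (Algorithm 1), given function symbols F = (f_1,…,f_n), grammars G = (G_1,…,G_n), and relational specification Ψ = ∀x̄. φ(x̄), returns a mapping P (not null), the programs in P satisfy Ψ, and the program P_i for each function symbol f_i conforms to its grammar G(f_i). -/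
namespace Relish

/-!
Every program returned by `Synthesize` is either a verified candidate (and then satisfies `Ψ`
by soundness of `Verify`) or was produced by inductive synthesis. In the latter case it is read
off an accepting run of the FTA at an occurrence node of its function symbol. That FTA was built
from the symbol's grammar, so each transition is a variable leaf or mirrors a production, and
its final states are labelled by the start symbol; `Final` and `Propagate` only remove final
states, so this survives. A run of such an automaton is a derivation, hence the program conforms.
-/

section GrammarFTA

variable {op val bop ν Q Q' : Type}

/-- `A` is built from the grammar `Gr` when its states are read as grammar symbols via `lbl`. -/
structure IsGrammarFTA (Gr : Grammar op ν) (lbl : Q → SymT ν) (A : FTA (Alpha op val bop) Q) :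
    Prop where
  trans_shape : ∀ a qs q, (a, qs, q) ∈ A.trans →
    (∃ i, a = Alpha.var i ∧ qs = [] ∧ lbl q = SymT.var i) ∨
    (∃ s o, a = Alpha.dsl o ∧ (s, o, qs.map lbl) ∈ Gr.prods ∧ lbl q = SymT.nt s)
  finals_start : ∀ q ∈ A.finals, lbl q = SymT.nt Gr.start

namespace IsGrammarFTA

variable {Gr : Grammar op ν} {lbl : Q → SymT ν} {A : FTA (Alpha op val bop) Q}

theorem derives_of_runFrom (hA : IsGrammarFTA Gr lbl A) {leaf : ℕ → Q}
    {t : Tree (Alpha op val bop)} {q : Q} (h : RunFrom A leaf t q) : Derives Gr (lbl q) t := by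
  induction h with
  | node a ts qs q htr _ hlen _ ih =>
    rcases hA.trans_shape a qs q htr with ⟨i, rfl, rfl, hq⟩ | ⟨s, o, rfl, hprod, hq⟩
    · obtain rfl : ts = [] := List.eq_nil_of_length_eq_zero hlen
      exact hq ▸ Derives.var i
    · refine hq ▸ Derives.prod s o _ ts hprod (by simp [hlen]) ?_
      rintro ⟨s', t'⟩ hmem
      rw [List.zip_map_left, List.mem_map] at hmem
      obtain ⟨⟨q', t''⟩, hmem', hpair⟩ := hmem
      obtain ⟨rfl, rfl⟩ := Prod.ext_iff.1 hpair
      exact ih (t'', q') (List.zip_swap qs ts ▸ List.mem_map_of_mem hmem')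

theorem conformsTo_of_runFrom (hA : IsGrammarFTA Gr lbl A) {leaf : ℕ → Q}
    {t : Tree (Alpha op val bop)} {q : Q} (hq : q ∈ A.finals) (h : RunFrom A leaf t q) :
    ConformsTo Gr t := by
  have hder := hA.derives_of_runFrom h
  rwa [hA.finals_start q hq] at hder

theorem mono (hA : IsGrammarFTA Gr lbl A) {B : FTA (Alpha op val bop) Q}
    (htrans : B.trans ⊆ A.trans) (hfinals : B.finals ⊆ A.finals) : IsGrammarFTA Gr lbl B :=
  ⟨fun a qs q h => hA.trans_shape a qs q (htrans h), fun q h => hA.finals_start q (hfinals h)⟩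

theorem mapFTA {g : Q' → Q} {A : FTA (Alpha op val bop) Q'} (hA : IsGrammarFTA Gr (lbl ∘ g) A) :
    IsGrammarFTA Gr lbl (mapFTA g A) := by
  constructor
  · rintro a _ _ ⟨a, qs, q, htr, ⟨⟩⟩
    rcases hA.trans_shape a qs q htr with ⟨i, ha, rfl, hq⟩ | ⟨s, o, ha, hprod, hq⟩
    · exact Or.inl ⟨i, ha, rfl, hq⟩
    · exact Or.inr ⟨s, o, ha, by rwa [List.map_map], hq⟩
  · rintro _ ⟨q, hq, rfl⟩
    exact hA.finals_start q hq

theorem propagate {H : HFTA (Alpha op val bop) Q} {v : List ℕ}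
    (hv : IsGrammarFTA Gr lbl (H.fta v)) (p : Tree (Alpha op val bop)) (W : Set (List ℕ)) :
    IsGrammarFTA Gr lbl ((Relish.propagate H p W).fta v) :=
  hv.mono (fun _ h => h) (fun _ h => h.1)

end IsGrammarFTA

theorem isGrammarFTA_buildFTA (Gr : Grammar op ν) (sem : op → List val → val) (arity : ℕ)
    (init : ℕ → Set val) : IsGrammarFTA Gr Prod.fst (buildFTA bop Gr sem arity init) := by
  constructor
  · rintro a qs q (⟨i, c, -, -⟩ | ⟨s, o, ss, cs, hprod, hlen, -⟩)
    · exact Or.inl ⟨i, rfl, rfl, rfl⟩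
    · exact Or.inr ⟨s, o, rfl, by rwa [List.map_fst_zip hlen.le], rfl⟩
  · exact fun q hq => hq.2

end GrammarFTA

section HFTA

variable {op val bop ν : Type}

def IsGrammarNode (Gr : Grammar op ν) (H : HFTA (Alpha op val bop) (TQ ν val)) (v : List ℕ) :
    Prop :=
  v ∈ H.nodes ∧ IsGrammarFTA Gr (fun q => q.2.1) (H.fta v)

theorem IsGrammarNode.combine_cons {Gr : Grammar op ν} {A : FTA (Alpha op val bop) (SymT ν × val)}
    {Hs : List (HFTA (Alpha op val bop) (TQ ν val))} {i : ℕ} {H : HFTA (Alpha op val bop) (TQ ν val)}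
    (hi : Hs[i]? = some H) {v : List ℕ} (hv : IsGrammarNode Gr H v) :
    IsGrammarNode Gr (combine A Hs) (i :: v) := by
  refine ⟨Or.inr ⟨i, H, v, hi, hv.1, rfl⟩, ?_⟩
  simp only [combine, hi]
  exact hv.2.mapFTA (g := tagState i)

theorem isGrammarNode_combine_nil {Gr : Grammar op ν} (sem : op → List val → val) (arity : ℕ)
    (init : ℕ → Set val) (Hs : List (HFTA (Alpha op val bop) (TQ ν val))) :
    IsGrammarNode Gr (combine (buildFTA bop Gr sem arity init) Hs) [] :=
  ⟨Or.inl rfl, (isGrammarFTA_buildFTA Gr sem arity init).mapFTA (g := fun q => ([], q))⟩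

theorem IsGrammarNode.finalize {Gr : Grammar op ν} {H : HFTA (Alpha op val bop) (TQ ν val)}
    {v : List ℕ} (hv : IsGrammarNode Gr H v) (vtrue : val) :
    IsGrammarNode Gr (finalize vtrue H) v := by
  refine ⟨hv.1, ?_⟩
  by_cases h : v = []
  · subst h
    exact hv.2.mono (fun _ h => by simpa [Relish.finalize] using h)
      (fun _ h => by simp only [Relish.finalize, if_true] at h; exact h.1)
  · simpa only [Relish.finalize, h, if_false] using hv.2

theorem BuildsH.isGrammarNode_of_occursAt {F : Type} {gram : F → Grammar op ν}
    {sem : op → List val → val} {bsem : bop → val → val → val} {nsem : val → val}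
    {vtrue vfalse : val} {ψ : GS F val bop} {H : HFTA (Alpha op val bop) (TQ ν val)}
    (h : BuildsH gram sem bsem nsem vtrue vfalse ψ H) {f : F} {v : List ℕ}
    (hocc : OccursAt ψ f v) : IsGrammarNode (gram f) H v := by
  induction h generalizing v with
  | cst => cases hocc
  | app g ts Hs hlen _ ih =>
    cases hocc with
    | here => exact isGrammarNode_combine_nil sem _ _ Hs
    | app _ _ _ i t p hti hocc' =>
      obtain ⟨hi, -⟩ := List.getElem?_eq_some_iff.1 hti
      have hHi : Hs[i]? = some Hs[i] := List.getElem?_eq_getElem (hlen ▸ hi)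
      exact .combine_cons hHi
        (ih (t, Hs[i]) (List.mem_of_getElem? (List.getElem?_zip_eq_some.2 ⟨hti, hHi⟩)) hocc')
  | bin _ _ _ _ _ _ _ ih₁ ih₂ =>
    cases hocc with
    | binl _ _ _ _ p hocc' => exact .combine_cons (i := 0) rfl (ih₁ hocc')
    | binr _ _ _ _ p hocc' => exact .combine_cons (i := 1) rfl (ih₂ hocc')
  | neg _ _ _ ih =>
    cases hocc with
    | neg _ _ p hocc' => exact .combine_cons (i := 0) rfl (ih hocc')

end HFTA

theorem FPRet.conformsTo {op val bop ν Q F₀ : Type} [DecidableEq F₀]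
    {G : F₀ → Grammar op ν} {lbl : Q → SymT ν} {occNodes : F₀ → Set (List ℕ)}
    {H : HFTA (Alpha op val bop) Q} {P : F₀ → Option (Tree (Alpha op val bop))}
    {R : F₀ → Tree (Alpha op val bop)} (h : FPRet occNodes H P R)
    (hH : ∀ f, ∀ v ∈ occNodes f, v ∈ H.nodes ∧ IsGrammarFTA (G f) lbl (H.fta v))
    (hP : ∀ f p, P f = some p → ConformsTo (G f) p) (f : F₀) : ConformsTo (G f) (R f) := by
  induction h with
  | done _ _ _ hR => exact hP f _ (hR f)
  | step H P R g v p T _ hv hacc hTv _ _ ih =>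
    refine ih (fun f w hw => ?_) (fun f q hq => ?_)
    · obtain ⟨hw, hA⟩ := hH f w hw
      exact ⟨hw, hA.propagate p _⟩
    · rcases eq_or_ne f g with rfl | hfg
      · obtain rfl : p = q := Option.some.inj (by simpa using hq)
        obtain ⟨ρ, leaf, hacc⟩ := hacc
        obtain ⟨hv, hA⟩ := hH f v hv
        obtain ⟨hfin, hrun, -⟩ := hacc v hv
        exact hTv ▸ hA.conformsTo_of_runFrom hfin hrun
      · exact hP f q (by simpa [Function.update_of_ne hfg] using hq)

theorem InductiveSynth.conformsTo {op val bop ν F₀ : Type} [Inhabited val] [DecidableEq F₀]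
    {G : F₀ → Grammar op ν} {sem : op → List val → val} {bsem : bop → val → val → val}
    {nsem : val → val} {vtrue vfalse : val} {Φ : GS F₀ val bop}
    {R : F₀ → Tree (Alpha op val bop)} (h : InductiveSynth G sem bsem nsem vtrue vfalse Φ R)
    (f : F₀) : ConformsTo (G f) (R f) := by
  obtain ⟨F, Mi, Φ', H, -, -, hbuild, hfind⟩ := h
  refine hfind.conformsTo (lbl := fun q => q.2.1) ?_ (fun _ _ h => nomatch h) f
  rintro _ v ⟨f', rfl, hocc⟩
  exact (hbuild.isGrammarNode_of_occursAt hocc).finalize vtrue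

theorem SynthRet.sound {op val bop ν F₀ : Type} [Inhabited val] [DecidableEq F₀]
    {G : F₀ → Grammar op ν} {sem : op → List val → val} {bsem : bop → val → val → val}
    {nsem : val → val} {vtrue vfalse : val} {andOp : bop} {Ψ : (ℕ → val) → GS F₀ val bop}
    {verify : (F₀ → Tree (Alpha op val bop)) → Prop}
    (hverify : ∀ P, verify P → ∀ σ, Satisfies sem bsem nsem vtrue P (Ψ σ))
    {P R : F₀ → Tree (Alpha op val bop)} {Φ : GS F₀ val bop}
    (h : SynthRet G sem bsem nsem vtrue vfalse andOp Ψ verify P Φ R)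
    (hP : ∀ f, ConformsTo (G f) (P f)) :
    (∀ σ, Satisfies sem bsem nsem vtrue R (Ψ σ)) ∧ ∀ f, ConformsTo (G f) (R f) := by
  induction h with
  | verified P _ hv => exact ⟨hverify P hv, hP⟩
  | refine _ _ _ _ _ _ _ hsynth _ ih => exact ih hsynth.conformsTo

/-- Soundness of the CEGIS synthesis algorithm (Theorem 4.3). -/
theorem synthesize_sound
    {op val bop ν F₀ : Type} [Inhabited val] [DecidableEq F₀]
    (G : F₀ → Grammar op ν)
    (sem : op → List val → val) (bsem : bop → val → val → val) (nsem : val → val)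
    (vtrue vfalse : val) (andOp : bop)
    (Ψ : (ℕ → val) → GS F₀ val bop)
    (verify : (F₀ → Tree (Alpha op val bop)) → Prop)
    (hverify : ∀ P : F₀ → Tree (Alpha op val bop),
        verify P → ∀ σ : ℕ → val, Satisfies sem bsem nsem vtrue P (Ψ σ))
    (P₀ R : F₀ → Tree (Alpha op val bop))
    (hP₀ : ∀ f : F₀, ConformsTo (G f) (P₀ f))
    (hrun : SynthRet G sem bsem nsem vtrue vfalse andOp Ψ verify P₀ (GS.cst vtrue) R) :
    (∀ σ : ℕ → val, Satisfies sem bsem nsem vtrue R (Ψ σ)) ∧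
    ∀ f : F₀, ConformsTo (G f) (R f) :=
  hrun.sound hverify hP₀

end Relish
end
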